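/- Define a betweenness relation on the five vertices {A,B,C,D,E} of a regular pentagon (identified with the set Fin 5, vertices at positions k·2π/5 on a circle) by: for three distinct vertices X, Y, Z, (XYZ) holds iff Y is the apex of the isosceles triangle XYZ, i.e. the distances satisfy |XY| = |YZ| ≠ |XZ|. Then every triangle formed by three distinct vertices of a regular pentagon is isosceles but not equilateral, so this relation is well-defined: for any three distinct vertices exactly one of them is the apex. -/

import Mathlib

open Real

/-- Vertices of the regular pentagon on the unit circle in the Euclidean plane. -/
noncomputable def pentagonVertex (k : Fin 5) : EuclideanSpace ℝ (Fin 2) :=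
  WithLp.toLp 2 ![Real.cos (2 * π * (k.val : ℝ) / 5), Real.sin (2 * π * (k.val : ℝ) / 5)]

/-- `y` is the apex of the isosceles triangle `x y z`:
its distances to the other two vertices are equal, and the triangle is not equilateral. -/
noncomputable def IsApex (x y z : Fin 5) : Prop :=
  dist (pentagonVertex x) (pentagonVertex y) = dist (pentagonVertex y) (pentagonVertex z) ∧
  dist (pentagonVertex x) (pentagonVertex y) ≠ dist (pentagonVertex x) (pentagonVertex z)

/-!
The squared distance between the points of the unit circle at angles `θ` and `ψ` is
`2 - 2 cos (ψ - θ)`, and `cos θ = cos ψ` only for `θ = ±ψ`. As `k ↦ 2πk/5` embeds `ℤ/5ℤ`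
additively into the angles, two chords of the pentagon have equal length exactly when the
differences of their endpoint indices agree up to sign in `ℤ/5ℤ`, which reduces the theorem to a
finite check in `ℤ/5ℤ`.
-/

namespace ZMod

variable {N : ℕ} [NeZero N]

noncomputable def toAngle : ZMod N →+ Real.Angle :=
  lift N ⟨AddMonoidHom.mk' (fun m : ℤ ↦ ↑(2 * π * m / N))
    (fun a b ↦ by rw [← Real.Angle.coe_add]; push_cast; ring_nf),
    by simp [mul_div_assoc, Real.Angle.coe_two_pi]⟩

lemma toAngle_intCast (m : ℤ) : toAngle (m : ZMod N) = ↑(2 * π * m / N) :=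
  lift_coe _ _ m

lemma toAngle_natCast (m : ℕ) : toAngle (m : ZMod N) = ↑(2 * π * m / N) := by
  simpa using toAngle_intCast (N := N) m

variable (N) in
lemma toAngle_injective : Function.Injective (toAngle : ZMod N → Real.Angle) := by
  refine (lift_injective N).2 fun m hm ↦ ?_
  obtain ⟨k, hk⟩ := Real.Angle.coe_eq_zero_iff.1 hm
  have hN : (N : ℝ) ≠ 0 := NeZero.ne _
  have hmk : (m : ℝ) = k * N := by
    rw [zsmul_eq_mul, eq_div_iff hN] at hk
    exact mul_left_cancel₀ two_pi_pos.ne' (by linear_combination -hk)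
  rw [intCast_zmod_eq_zero_iff_dvd]
  exact ⟨k, by exact_mod_cast hmk.trans (mul_comm _ _)⟩

end ZMod

noncomputable def unitCirclePoint (θ : Real.Angle) : EuclideanSpace ℝ (Fin 2) :=
  WithLp.toLp 2 ![θ.cos, θ.sin]

lemma dist_unitCirclePoint_sq (θ ψ : Real.Angle) :
    dist (unitCirclePoint θ) (unitCirclePoint ψ) ^ 2 = 2 - 2 * (ψ - θ).cos := by
  induction θ using Real.Angle.induction_on with | _ x
  induction ψ using Real.Angle.induction_on with | _ y
  rw [EuclideanSpace.dist_eq, Real.sq_sqrt (by positivity), ← Real.Angle.coe_sub]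
  simp only [unitCirclePoint, Real.Angle.cos_coe, Real.Angle.sin_coe, PiLp.toLp_apply,
    Fin.sum_univ_two, Matrix.cons_val_zero, Matrix.cons_val_one, Real.dist_eq, sq_abs, Real.cos_sub]
  linear_combination sin_sq_add_cos_sq x + sin_sq_add_cos_sq y

lemma dist_unitCirclePoint_eq_dist_iff (θ ψ θ' ψ' : Real.Angle) :
    dist (unitCirclePoint θ) (unitCirclePoint ψ) = dist (unitCirclePoint θ') (unitCirclePoint ψ')
      ↔ ψ - θ = ψ' - θ' ∨ ψ - θ = -(ψ' - θ') := by
  rw [← Real.Angle.cos_eq_iff_eq_or_eq_neg, ← sq_eq_sq₀ dist_nonneg dist_nonneg,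
    dist_unitCirclePoint_sq, dist_unitCirclePoint_sq]
  constructor <;> intro h <;> linarith

lemma pentagonVertex_eq (k : Fin 5) :
    pentagonVertex k = unitCirclePoint (ZMod.toAngle (k.val : ZMod 5)) := by
  simp only [pentagonVertex, unitCirclePoint, ZMod.toAngle_natCast, Real.Angle.cos_coe,
    Real.Angle.sin_coe, Nat.cast_ofNat]

lemma dist_pentagonVertex_eq_dist_iff (a b c d : Fin 5) :
    dist (pentagonVertex a) (pentagonVertex b) = dist (pentagonVertex c) (pentagonVertex d)
      ↔ (b.val - a.val : ZMod 5) = d.val - c.val ∨ (b.val - a.val : ZMod 5) = -(d.val - c.val) := by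
  simp only [pentagonVertex_eq, dist_unitCirclePoint_eq_dist_iff, ← map_sub, ← map_neg,
    (ZMod.toAngle_injective 5).eq_iff]

/-- Every triangle formed by three distinct vertices of a regular pentagon is isosceles but
not equilateral, and for any three distinct vertices exactly one of them is the apex;
hence the betweenness relation `(XYZ) ↔ Y is the apex` is well-defined. -/
theorem pentagon_isosceles_not_equilateral_unique_apex :
    ∀ x y z : Fin 5, x ≠ y → y ≠ z → x ≠ z →
      (¬ (dist (pentagonVertex x) (pentagonVertex y) = dist (pentagonVertex y) (pentagonVertex z) ∧
          dist (pentagonVertex y) (pentagonVertex z) = dist (pentagonVertex x) (pentagonVertex z))) ∧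
      ((IsApex x y z ∧ ¬ IsApex y x z ∧ ¬ IsApex x z y) ∨
       (¬ IsApex x y z ∧ IsApex y x z ∧ ¬ IsApex x z y) ∨
       (¬ IsApex x y z ∧ ¬ IsApex y x z ∧ IsApex x z y)) := by
  simp only [IsApex, ne_eq, dist_pentagonVertex_eq_dist_iff]
  decide
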